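/- arXiv:2602.16303 — 2 statements merged into one kernel-verified Lean document; each statement's English description precedes it below -/
import Mathlib

section
/- Let 0 < a < 1 and c > 0. The function B is monotone nondecreasing on ℝ. -/
noncomputable def B (a c s : ℝ) : ℝ :=
  if s < a then 0
  else if s ≤ 1 then (2 * c / 3) * (((1 - s) / (1 - a)) ^ 2 * (3 * a - 1 - 2 * s) + (1 - a))
  else (2 * c / 3) * (1 - a)

-- key polynomial inequality for the middle piece
lemma B_key (a x y : ℝ) (hax : a ≤ x) (hxy : x ≤ y) (hy1 : y ≤ 1) :
    (1 - x) ^ 2 * (3 * a - 1 - 2 * x) ≤ (1 - y) ^ 2 * (3 * a - 1 - 2 * y) := by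
  nlinarith [mul_nonneg (mul_nonneg (sub_nonneg.2 hxy) (by linarith : (0:ℝ) ≤ 1 - x))
      (by linarith : (0:ℝ) ≤ x - a),
    mul_nonneg (mul_nonneg (sub_nonneg.2 hxy) (by linarith : (0:ℝ) ≤ 1 - y))
      (by linarith : (0:ℝ) ≤ y - a),
    mul_nonneg (mul_nonneg (sub_nonneg.2 hxy) (by linarith : (0:ℝ) ≤ 2 - x - y))
      (by linarith : (0:ℝ) ≤ x + y - 2 * a),
    sq_nonneg (x - y), sq_nonneg (x + y - 2 * a)]

theorem B_monotone (a c : ℝ) (ha0 : 0 < a) (ha1 : a < 1) (hc : 0 < c) :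
    Monotone (B a c) := by
  have hone : (0:ℝ) < 1 - a := by linarith
  have hcc : (0:ℝ) < 2 * c / 3 := by linarith
  -- middle piece expression
  have hmidle : ∀ s, a ≤ s → s ≤ 1 →
      0 ≤ ((1 - s) / (1 - a)) ^ 2 * (3 * a - 1 - 2 * s) + (1 - a) := by
    intro s has hs1
    have := B_key a a s le_rfl has hs1
    have ha' : (1 - a) ^ 2 * (3 * a - 1 - 2 * a) = -(1 - a)^3 := by ring
    have h2 : -(1 - a)^3 ≤ (1 - s) ^ 2 * (3 * a - 1 - 2 * s) := by
      calc -(1 - a)^3 = (1 - a) ^ 2 * (3 * a - 1 - 2 * a) := by ring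
        _ ≤ _ := this
    have hd : ((1 - s) / (1 - a)) ^ 2 * (3 * a - 1 - 2 * s)
        = (1 - s) ^ 2 * (3 * a - 1 - 2 * s) / (1 - a) ^ 2 := by
      field_simp
    rw [hd]
    have h3 : -(1 - a) ≤ (1 - s) ^ 2 * (3 * a - 1 - 2 * s) / (1 - a) ^ 2 := by
      rw [le_div_iff₀ (by positivity)]
      nlinarith [h2]
    linarith
  have hmidhigh : ∀ s, a ≤ s → s ≤ 1 →
      ((1 - s) / (1 - a)) ^ 2 * (3 * a - 1 - 2 * s) + (1 - a) ≤ 1 - a := by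
    intro s has hs1
    have h1 : 3 * a - 1 - 2 * s ≤ 0 := by linarith
    nlinarith [sq_nonneg ((1 - s) / (1 - a))]
  intro x y hxy
  unfold B
  split_ifs with hx1 hx2 hy1 hy2 hy3 hy4 hy5 <;> try linarith
  · exact mul_nonneg hcc.le (hmidle y (le_of_not_gt hx2) hy1)
  · positivity
  · have key := B_key a x y (le_of_not_gt hx1) hxy hy4
    have hd : ∀ s, ((1 - s) / (1 - a)) ^ 2 * (3 * a - 1 - 2 * s)
        = (1 - s) ^ 2 * (3 * a - 1 - 2 * s) / (1 - a) ^ 2 := by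
      intro s; field_simp
    rw [hd, hd]
    have h5 : (1 - x) ^ 2 * (3 * a - 1 - 2 * x) / (1 - a) ^ 2
        ≤ (1 - y) ^ 2 * (3 * a - 1 - 2 * y) / (1 - a) ^ 2 :=
      div_le_div_of_nonneg_right key (by positivity)
    gcongr
  · exact mul_le_mul_of_nonneg_left (hmidhigh x (le_of_not_gt hx1) hy2) hcc.le
end

section
/- Let 0 < a < 1 and c > 0. The function B is Lipschitz continuous on ℝ with Lipschitz constant c, i.e. |B(s) − B(t)| ≤ c·|s − t| for all s, t ∈ ℝ. -/
private lemma key (a c s t : ℝ) (ha1 : a < 1) (hc : 0 < c)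
    (hs : a ≤ s) (hst : s ≤ t) (ht : t ≤ 1) :
    0 ≤ (2 * c / 3) * (((1 - t) / (1 - a)) ^ 2 * (3 * a - 1 - 2 * t) + (1 - a))
      - (2 * c / 3) * (((1 - s) / (1 - a)) ^ 2 * (3 * a - 1 - 2 * s) + (1 - a)) ∧
    (2 * c / 3) * (((1 - t) / (1 - a)) ^ 2 * (3 * a - 1 - 2 * t) + (1 - a))
      - (2 * c / 3) * (((1 - s) / (1 - a)) ^ 2 * (3 * a - 1 - 2 * s) + (1 - a)) ≤ c * (t - s) := by
  have h1a : (0:ℝ) < 1 - a := by linarith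
  have hne : (1 - a) ≠ 0 := h1a.ne'
  set g : ℝ := -2*(t^2+t*s+s^2) + 3*(a+1)*(t+s) - 6*a with hg_def
  have hg0 : 0 ≤ g := by
    nlinarith [mul_nonneg (sub_nonneg.2 hs) (sub_nonneg.2 (hst.trans ht)),
      mul_nonneg (sub_nonneg.2 (hs.trans hst)) (sub_nonneg.2 ht), sq_nonneg (t - s)]
  have hg1 : g ≤ (3/2) * (1 - a)^2 := by
    nlinarith [sq_nonneg (s + t - 1 - a), sq_nonneg (t - s)]
  have hD : (2 * c / 3) * (((1 - t) / (1 - a)) ^ 2 * (3 * a - 1 - 2 * t) + (1 - a))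
      - (2 * c / 3) * (((1 - s) / (1 - a)) ^ 2 * (3 * a - 1 - 2 * s) + (1 - a))
      = (2 * c / 3) * ((t - s) * g) / (1 - a)^2 := by
    field_simp
    ring
  have hts : 0 ≤ t - s := sub_nonneg.2 hst
  constructor
  · rw [hD]
    positivity
  · rw [hD, div_le_iff₀ (by positivity)]
    nlinarith [mul_le_mul_of_nonneg_left (mul_le_mul_of_nonneg_left hg1 hts) hc.le]

private lemma aux (a c : ℝ) (ha0 : 0 < a) (ha1 : a < 1) (hc : 0 < c)
    (s t : ℝ) (hst : s ≤ t) : |B a c s - B a c t| ≤ c * (t - s) := by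
  have h1a : (0:ℝ) < 1 - a := by linarith
  have hne : (1 - a) ≠ 0 := h1a.ne'
  have hBa : (2 * c / 3) * (((1 - a) / (1 - a)) ^ 2 * (3 * a - 1 - 2 * a) + (1 - a)) = 0 := by
    rw [div_self hne]; ring
  have hB1 : (2 * c / 3) * (((1 - 1) / (1 - a)) ^ 2 * (3 * a - 1 - 2 * 1) + (1 - a))
      = (2 * c / 3) * (1 - a) := by ring
  unfold B
  rcases lt_or_ge s a with hsa | hsa
  · rcases lt_or_ge t a with hta | hta
    · simp [hsa, hta]; nlinarith
    · rcases le_or_gt t 1 with ht1 | ht1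
      · have h := key a c a t ha1 hc le_rfl hta ht1
        simp only [if_pos hsa, if_neg (not_lt.2 hta), if_pos ht1]
        rw [abs_sub_comm, abs_of_nonneg (by linarith [h.1, hBa])]
        have h2 := h.2
        rw [hBa] at h2
        nlinarith [mul_pos hc (show (0:ℝ) < a - s by linarith)]
      · have h := key a c a 1 ha1 hc le_rfl ha1.le le_rfl
        have hta : ¬ t < a := not_lt.2 (by linarith)
        simp only [if_pos hsa, hta, if_false, if_neg (not_le.2 ht1)]
        rw [hBa, hB1] at h
        rw [abs_sub_comm, abs_of_nonneg (by linarith [h.1])]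
        nlinarith [h.2, mul_pos hc (show (0:ℝ) < (t - s) - (1 - a) by linarith)]
  · rcases le_or_gt s 1 with hs1 | hs1
    · rcases le_or_gt t 1 with ht1 | ht1
      · have h := key a c s t ha1 hc hsa hst ht1
        simp only [if_neg (not_lt.2 hsa), if_pos hs1, if_neg (not_lt.2 (hsa.trans hst)),
          if_pos ht1]
        rw [abs_sub_comm, abs_of_nonneg (by linarith [h.1])]
        linarith [h.2]
      · have h := key a c s 1 ha1 hc hsa hs1 le_rfl
        rw [hB1] at h
        simp only [if_neg (not_lt.2 hsa), if_pos hs1, if_neg (not_lt.2 (hsa.trans hst)),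
          if_neg (not_le.2 ht1)]
        rw [abs_sub_comm, abs_of_nonneg (by linarith [h.1])]
        nlinarith [h.2, mul_pos hc (show (0:ℝ) < t - 1 by linarith)]
    · have hta : ¬ t < a := not_lt.2 (hsa.trans hst)
      have ht1 : ¬ t ≤ 1 := not_le.2 (hs1.trans_le hst)
      simp only [if_neg (not_lt.2 hsa), if_neg (not_le.2 hs1), hta, ht1, if_neg, if_false]
      simp only [sub_self, abs_zero]
      nlinarith

theorem B_lipschitz (a c : ℝ) (ha0 : 0 < a) (ha1 : a < 1) (hc : 0 < c) :
    ∀ s t : ℝ, |B a c s - B a c t| ≤ c * |s - t| := by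
  intro s t
  rcases le_total s t with h | h
  · rw [abs_sub_comm s t, abs_of_nonneg (sub_nonneg.2 h)]
    exact aux a c ha0 ha1 hc s t h
  · rw [abs_of_nonneg (sub_nonneg.2 h), abs_sub_comm]
    exact aux a c ha0 ha1 hc t s h
end
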